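/- arXiv:2401.15761 — 2 statements merged into one kernel-verified Lean document; each statement's English description precedes it below -/
import Mathlib

section
/- Under the hypotheses of the Gaussian beam construction of Proposition A1 (Y(0) = I, N(0) = M₀ with M₀ symmetric), the matrix M(s) = N(s)Y(s)⁻¹ is symmetric for all s. More precisely: if (Y, N) solves the linear system Ẏ = BY + CN, Ṅ = -AY - BᵀN with A(s), C(s) symmetric real matrices, Y(s) invertible for all s, and N(0)Y(0)⁻¹ symmetric, then N(s)Y(s)⁻¹ is symmetric for all s. -/
/-!
Along any solution of the Hamiltonian system the Wronskian `YᵀN - NᵀY` has derivative zero,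
because the terms `YᵀAY` and `NᵀCN` are symmetric when `A` and `C` are; so it vanishes for all
`s` once it vanishes at `0`. For invertible `Y`, the vanishing of `YᵀN - NᵀY` is exactly the
symmetry of `N Y⁻¹`, conjugated by `Y`.
-/

open Matrix

attribute [local instance] Matrix.normedAddCommGroup Matrix.normedSpace

section Algebra

variable {R n : Type*} [CommRing R] [Fintype n]

def wronskian (Y N : Matrix n n R) : Matrix n n R :=
  Yᵀ * N - Nᵀ * Y

theorem isSymm_mul_inv_iff_wronskian_eq_zero [DecidableEq n] {Y : Matrix n n R} (hY : IsUnit Y)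
    (N : Matrix n n R) : (N * Y⁻¹).IsSymm ↔ wronskian Y N = 0 := by
  obtain ⟨_⟩ := hY.nonempty_invertible
  rw [wronskian, sub_eq_zero, IsSymm, transpose_mul, transpose_nonsing_inv,
    inv_mul_eq_iff_eq_mul_of_invertible, ← Matrix.mul_assoc, eq_comm,
    mul_inv_eq_iff_eq_mul_of_invertible]

theorem wronskian_hamiltonian_deriv_eq_zero {A B C : Matrix n n R} (hA : A.IsSymm)
    (hC : C.IsSymm) (Y N : Matrix n n R) :
    (B * Y + C * N)ᵀ * N + Yᵀ * (-(A * Y) - Bᵀ * N)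
      - ((-(A * Y) - Bᵀ * N)ᵀ * Y + Nᵀ * (B * Y + C * N)) = 0 := by
  simp only [transpose_add, transpose_sub, transpose_neg, transpose_mul, transpose_transpose,
    hA.eq, hC.eq]
  noncomm_ring

end Algebra

section Calculus

variable {𝕜 R : Type*} [NontriviallyNormedField 𝕜] [NormedCommRing R] [NormedAlgebra 𝕜 R]
  {l m n : Type*} {x : 𝕜}

theorem HasDerivAt.matrix_apply [Fintype m] [Fintype n] {f : 𝕜 → Matrix m n R}
    {f' : Matrix m n R} (hf : HasDerivAt f f' x) (i : m) (j : n) :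
    HasDerivAt (fun t => f t i j) (f' i j) x :=
  hasDerivAt_pi.mp (hasDerivAt_pi.mp hf i) j

theorem HasDerivAt.matrix_transpose [Fintype m] [Fintype n] {f : 𝕜 → Matrix m n R}
    {f' : Matrix m n R} (hf : HasDerivAt f f' x) : HasDerivAt (fun t => (f t)ᵀ) f'ᵀ x :=
  hasDerivAt_pi.mpr fun i => hasDerivAt_pi.mpr fun j => hf.matrix_apply j i

theorem HasDerivAt.matrix_mul [Fintype l] [Fintype m] [Fintype n] {f : 𝕜 → Matrix l m R}
    {g : 𝕜 → Matrix m n R} {f' : Matrix l m R} {g' : Matrix m n R} (hf : HasDerivAt f f' x)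
    (hg : HasDerivAt g g' x) : HasDerivAt (fun t => f t * g t) (f' * g x + f x * g') x := by
  refine hasDerivAt_pi.mpr fun i => hasDerivAt_pi.mpr fun j => ?_
  simp only [Matrix.add_apply, mul_apply, ← Finset.sum_add_distrib]
  exact HasDerivAt.fun_sum fun k _ => (hf.matrix_apply i k).fun_mul (hg.matrix_apply k j)

theorem HasDerivAt.wronskian [Fintype n] {Y N : 𝕜 → Matrix n n R} {Y' N' : Matrix n n R}
    (hY : HasDerivAt Y Y' x) (hN : HasDerivAt N N' x) :
    HasDerivAt (fun t => wronskian (Y t) (N t))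
      (Y'ᵀ * N x + (Y x)ᵀ * N' - (N'ᵀ * Y x + (N x)ᵀ * Y')) x :=
  (hY.matrix_transpose.matrix_mul hN).sub (hN.matrix_transpose.matrix_mul hY)

end Calculus

theorem wronskian_eq_of_hamiltonian {𝕜 R n : Type*} [RCLike 𝕜] [NormedCommRing R]
    [NormedAlgebra 𝕜 R] [Fintype n] {A B C Y N : 𝕜 → Matrix n n R} (hA : ∀ s, (A s).IsSymm)
    (hC : ∀ s, (C s).IsSymm) (hY : ∀ s, HasDerivAt Y (B s * Y s + C s * N s) s)
    (hN : ∀ s, HasDerivAt N (-(A s * Y s) - (B s)ᵀ * N s) s) (s t : 𝕜) :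
    wronskian (Y s) (N s) = wronskian (Y t) (N t) := by
  have hW : ∀ s, HasDerivAt (fun t => wronskian (Y t) (N t)) 0 s := fun s => by
    simpa only [wronskian_hamiltonian_deriv_eq_zero (hA s) (hC s)] using (hY s).wronskian (hN s)
  exact is_const_of_deriv_eq_zero (fun s => (hW s).differentiableAt) (fun s => (hW s).deriv) s t

theorem riccati_solution_symmetric_general
    (A B C : ℝ → Matrix (Fin 2) (Fin 2) ℝ)
    (hAsymm : ∀ s, (A s)ᵀ = A s) (hCsymm : ∀ s, (C s)ᵀ = C s)
    (Y N : ℝ → Matrix (Fin 2) (Fin 2) ℂ)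
    (hY : ∀ s, HasDerivAt Y ((B s).map Complex.ofReal * Y s + (C s).map Complex.ofReal * N s) s)
    (hN : ∀ s, HasDerivAt N
      (-((A s).map Complex.ofReal * Y s) - ((B s)ᵀ).map Complex.ofReal * N s) s)
    (hinv : ∀ s, IsUnit (Y s))
    (hM0 : (N 0 * (Y 0)⁻¹)ᵀ = N 0 * (Y 0)⁻¹) :
    ∀ s, (N s * (Y s)⁻¹)ᵀ = N s * (Y s)⁻¹ := by
  intro s
  have hW : wronskian (Y s) (N s) = wronskian (Y 0) (N 0) :=
    wronskian_eq_of_hamiltonian (B := fun s => (B s).map Complex.ofReal)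
      (fun s => IsSymm.map (hAsymm s) _) (fun s => IsSymm.map (hCsymm s) _) hY
      (fun s => by simpa only [transpose_map] using hN s) s 0
  rw [← IsSymm, isSymm_mul_inv_iff_wronskian_eq_zero (hinv s), hW,
    ← isSymm_mul_inv_iff_wronskian_eq_zero (hinv 0)]
  exact hM0

/-- If `(Y, N)` solves `Ẏ = BY + CN`, `Ṅ = -AY - BᵀN` with `A s`, `C s` symmetric real
matrices, `Y s` invertible for all `s`, and `N 0 * (Y 0)⁻¹` symmetric, then
`M s = N s * (Y s)⁻¹` is symmetric for all `s`. -/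
theorem riccati_solution_symmetric
    (A B C : ℝ → Matrix (Fin 2) (Fin 2) ℝ)
    (hA : Continuous A) (hB : Continuous B) (hC : Continuous C)
    (hAsymm : ∀ s, (A s)ᵀ = A s) (hCsymm : ∀ s, (C s)ᵀ = C s)
    (Y N : ℝ → Matrix (Fin 2) (Fin 2) ℂ)
    (hY : ∀ s, HasDerivAt Y ((B s).map Complex.ofReal * Y s + (C s).map Complex.ofReal * N s) s)
    (hN : ∀ s, HasDerivAt N
      (-((A s).map Complex.ofReal * Y s) - ((B s)ᵀ).map Complex.ofReal * N s) s)
    (hinv : ∀ s, IsUnit (Y s))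
    (hM0 : (N 0 * (Y 0)⁻¹)ᵀ = N 0 * (Y 0)⁻¹) :
    ∀ s, (N s * (Y s)⁻¹)ᵀ = N s * (Y s)⁻¹ :=
  riccati_solution_symmetric_general A B C hAsymm hCsymm Y N hY hN hinv hM0
end

section
/- Let M(s) = N(s)Y(s)⁻¹ be the Riccati solution from the Gaussian beam construction, with Im M(0) positive definite on the orthogonal complement of ẏ(0) and M(s)ẏ(s) = ṗ(s) with ẏ(s) ≠ 0, all real. Then Im M(s) remains positive definite on the orthogonal complement of ẏ(s): for all w ∈ ℝ² with w·ẏ(s) = 0 and w ≠ 0, ⟨w, Im M(s) w⟩ > 0. -/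
open Matrix Complex

attribute [local instance] Matrix.normedAddCommGroup Matrix.normedSpace

section GBAux

lemma gb_hasDerivAt_matrix {F : ℝ → Matrix (Fin 2) (Fin 2) ℂ} {F' : Matrix (Fin 2) (Fin 2) ℂ}
    {s : ℝ} :
    HasDerivAt F F' s ↔ ∀ i j, HasDerivAt (fun t => F t i j) (F' i j) s :=
  ⟨fun h i j => (hasDerivAt_pi.1 ((hasDerivAt_pi.1 h) i)) j,
   fun h => hasDerivAt_pi.2 fun i => hasDerivAt_pi.2 fun j => h i j⟩

lemma gb_hasDerivAt_conj {f : ℝ → ℂ} {f' : ℂ} {s : ℝ} (h : HasDerivAt f f' s) :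
    HasDerivAt (fun t => (starRingEnd ℂ) (f t)) ((starRingEnd ℂ) f') s := by
  have := (Complex.conjCLE.toContinuousLinearMap.hasFDerivAt (x := f s)).comp_hasDerivAt s h
  exact this

lemma gb_hasDerivAt_matMul {F G : ℝ → Matrix (Fin 2) (Fin 2) ℂ}
    {F' G' : Matrix (Fin 2) (Fin 2) ℂ} {s : ℝ}
    (hf : HasDerivAt F F' s) (hg : HasDerivAt G G' s) :
    HasDerivAt (fun t => F t * G t) (F' * G s + F s * G') s := by
  rw [gb_hasDerivAt_matrix] at *
  intro i j
  simp only [Matrix.add_apply, Matrix.mul_apply, ← Finset.sum_add_distrib]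
  exact HasDerivAt.fun_sum fun k _ => (hf i k).mul (hg k j)

lemma gb_hasDerivAt_conjTranspose {F : ℝ → Matrix (Fin 2) (Fin 2) ℂ}
    {F' : Matrix (Fin 2) (Fin 2) ℂ} {s : ℝ} (hf : HasDerivAt F F' s) :
    HasDerivAt (fun t => (F t)ᴴ) (F'ᴴ) s := by
  rw [gb_hasDerivAt_matrix] at *
  intro i j
  simpa [Matrix.conjTranspose_apply] using gb_hasDerivAt_conj (hf j i)

lemma gb_hasDerivAt_matMulVec {F : ℝ → Matrix (Fin 2) (Fin 2) ℂ} {v : ℝ → Fin 2 → ℂ}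
    {F' : Matrix (Fin 2) (Fin 2) ℂ} {v' : Fin 2 → ℂ} {s : ℝ}
    (hf : HasDerivAt F F' s) (hv : HasDerivAt v v' s) :
    HasDerivAt (fun t => F t *ᵥ v t) (F' *ᵥ v s + F s *ᵥ v') s := by
  rw [gb_hasDerivAt_matrix] at hf
  rw [hasDerivAt_pi] at *
  intro i
  simp only [Pi.add_apply, Matrix.mulVec, dotProduct, ← Finset.sum_add_distrib]
  exact HasDerivAt.fun_sum fun k _ => (hf i k).mul (hv k)

lemma gb_const_of_deriv_zero_mat {F : ℝ → Matrix (Fin 2) (Fin 2) ℂ}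
    (h : ∀ s, HasDerivAt F 0 s) (s : ℝ) : F s = F 0 := by
  apply is_const_of_fderiv_eq_zero (fun t => (h t).differentiableAt)
  intro t
  have := (h t).hasFDerivAt.fderiv
  refine this.trans ?_; ext x; simp; rfl

lemma gb_const_of_deriv_zero_vec {F : ℝ → Fin 2 → ℂ}
    (h : ∀ s, HasDerivAt F 0 s) (s : ℝ) : F s = F 0 := by
  apply is_const_of_fderiv_eq_zero (fun t => (h t).differentiableAt)
  intro t
  have := (h t).hasFDerivAt.fderiv
  simp only [this]; ext x; simp

lemma gb_conjT_map_ofReal (R : Matrix (Fin 2) (Fin 2) ℝ) :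
    (R.map Complex.ofReal)ᴴ = (Rᵀ).map Complex.ofReal := by
  ext i j
  simp [Matrix.conjTranspose_apply, Matrix.map_apply, Complex.conj_ofReal]

lemma gb_cast_mulVec (R : Matrix (Fin 2) (Fin 2) ℝ) (x : Fin 2 → ℝ) :
    (fun i => (((R *ᵥ x) i : ℝ) : ℂ)) = R.map Complex.ofReal *ᵥ (fun i => (x i : ℂ)) := by
  ext i
  simp [Matrix.mulVec, dotProduct, Matrix.map_apply]

lemma gb_hasDerivAt_castVec {y : ℝ → Fin 2 → ℝ} {y' : Fin 2 → ℝ} {s : ℝ}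
    (h : HasDerivAt y y' s) :
    HasDerivAt (fun t i => ((y t i : ℝ) : ℂ)) (fun i => ((y' i : ℝ) : ℂ)) s := by
  rw [hasDerivAt_pi] at *
  intro i
  exact Complex.ofRealCLM.hasFDerivAt.comp_hasDerivAt s (h i)

lemma gb_invariant_one
    (A B C : ℝ → Matrix (Fin 2) (Fin 2) ℝ)
    (hAsymm : ∀ s, (A s)ᵀ = A s) (hCsymm : ∀ s, (C s)ᵀ = C s)
    (Y N : ℝ → Matrix (Fin 2) (Fin 2) ℂ)
    (hY : ∀ s, HasDerivAt Y ((B s).map Complex.ofReal * Y s + (C s).map Complex.ofReal * N s) s)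
    (hN : ∀ s, HasDerivAt N
      (-((A s).map Complex.ofReal * Y s) - ((B s)ᵀ).map Complex.ofReal * N s) s)
    (s : ℝ) :
    (Y s)ᴴ * N s - (N s)ᴴ * Y s = (Y 0)ᴴ * N 0 - (N 0)ᴴ * Y 0 := by
  apply gb_const_of_deriv_zero_mat (F := fun t => (Y t)ᴴ * N t - (N t)ᴴ * Y t)
  intro t
  have h := (gb_hasDerivAt_matMul (gb_hasDerivAt_conjTranspose (hY t)) (hN t)).sub
    (gb_hasDerivAt_matMul (gb_hasDerivAt_conjTranspose (hN t)) (hY t))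
  refine HasDerivAt.congr_deriv h (Eq.symm ?_)
  simp only [conjTranspose_add, conjTranspose_mul, conjTranspose_neg, conjTranspose_sub,
    gb_conjT_map_ofReal, hAsymm, hCsymm, Matrix.transpose_transpose]
  noncomm_ring

lemma gb_invariant_two
    (A B C : ℝ → Matrix (Fin 2) (Fin 2) ℝ)
    (hAsymm : ∀ s, (A s)ᵀ = A s) (hCsymm : ∀ s, (C s)ᵀ = C s)
    (Y N : ℝ → Matrix (Fin 2) (Fin 2) ℂ)
    (hY : ∀ s, HasDerivAt Y ((B s).map Complex.ofReal * Y s + (C s).map Complex.ofReal * N s) s)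
    (hN : ∀ s, HasDerivAt N
      (-((A s).map Complex.ofReal * Y s) - ((B s)ᵀ).map Complex.ofReal * N s) s)
    (yd pd : ℝ → Fin 2 → ℝ)
    (hyd : ∀ s, HasDerivAt yd (B s *ᵥ yd s + C s *ᵥ pd s) s)
    (hpd : ∀ s, HasDerivAt pd (-(A s *ᵥ yd s) - (B s)ᵀ *ᵥ pd s) s)
    (s : ℝ) :
    (Y s)ᴴ *ᵥ (fun i => (pd s i : ℂ)) - (N s)ᴴ *ᵥ (fun i => (yd s i : ℂ))
      = (Y 0)ᴴ *ᵥ (fun i => (pd 0 i : ℂ)) - (N 0)ᴴ *ᵥ (fun i => (yd 0 i : ℂ)) := by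
  apply gb_const_of_deriv_zero_vec
    (F := fun t => (Y t)ᴴ *ᵥ (fun i => (pd t i : ℂ)) - (N t)ᴴ *ᵥ (fun i => (yd t i : ℂ)))
  intro t
  have hydC : HasDerivAt (fun t => (fun i => ((yd t i : ℝ) : ℂ)))
      ((B t).map Complex.ofReal *ᵥ (fun i => (yd t i : ℂ))
        + (C t).map Complex.ofReal *ᵥ (fun i => (pd t i : ℂ))) t := by
    have := gb_hasDerivAt_castVec (hyd t)
    convert this using 1
    funext i
    simp only [← gb_cast_mulVec]
    simp
  have hpdC : HasDerivAt (fun t => (fun i => ((pd t i : ℝ) : ℂ)))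
      (-((A t).map Complex.ofReal *ᵥ (fun i => (yd t i : ℂ)))
        - ((B t)ᵀ).map Complex.ofReal *ᵥ (fun i => (pd t i : ℂ))) t := by
    have := gb_hasDerivAt_castVec (hpd t)
    convert this using 1
    funext i
    simp only [← gb_cast_mulVec]
    simp
    fin_cases i <;> simp
  have h := (gb_hasDerivAt_matMulVec (gb_hasDerivAt_conjTranspose (hY t)) hpdC).sub
    (gb_hasDerivAt_matMulVec (gb_hasDerivAt_conjTranspose (hN t)) hydC)
  refine HasDerivAt.congr_deriv h (Eq.symm ?_)
  simp only [conjTranspose_add, conjTranspose_mul, conjTranspose_neg, conjTranspose_sub,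
    gb_conjT_map_ofReal, hAsymm, hCsymm, Matrix.transpose_transpose, Matrix.add_mulVec,
    Matrix.neg_mulVec, Matrix.sub_mulVec, Matrix.mulVec_add, Matrix.mulVec_neg,
    Matrix.mulVec_sub, ← Matrix.mulVec_mulVec]
  abel

lemma gb_decomp2 (e : Fin 2 → ℝ) (he : e ≠ 0) (v : Fin 2 → ℂ) :
    ∃ lam mu : ℂ, v = lam • (fun i => (e i : ℂ)) + mu • (fun i => ((![-(e 1), e 0]) i : ℂ)) := by
  have hne : e 0 ≠ 0 ∨ e 1 ≠ 0 := by
    by_contra h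
    push_neg at h
    exact he (funext fun i => by fin_cases i <;> simp [h.1, h.2])
  have hd : (0:ℝ) < e 0 ^ 2 + e 1 ^ 2 := by
    rcases hne with h | h
    · have : (0:ℝ) < e 0 ^ 2 := by positivity
      nlinarith [sq_nonneg (e 1)]
    · have : (0:ℝ) < e 1 ^ 2 := by positivity
      nlinarith [sq_nonneg (e 0)]
  have hdC : ((e 0 : ℂ) ^ 2 + (e 1 : ℂ) ^ 2) ≠ 0 := by
    rw [show ((e 0 : ℂ) ^ 2 + (e 1 : ℂ) ^ 2) = ((e 0 ^ 2 + e 1 ^ 2 : ℝ) : ℂ) by push_cast; ring]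
    exact_mod_cast hd.ne'
  refine ⟨(v 0 * e 0 + v 1 * e 1) / ((e 0 : ℂ)^2 + (e 1 : ℂ)^2),
          (v 1 * e 0 - v 0 * e 1) / ((e 0 : ℂ)^2 + (e 1 : ℂ)^2), funext fun i => ?_⟩
  fin_cases i <;>
    · simp [Matrix.cons_val_zero, Matrix.cons_val_one]
      field_simp
      ring

lemma gb_vecMul_conjT (A : Matrix (Fin 2) (Fin 2) ℂ) (u : Fin 2 → ℂ) :
    (fun i => (starRingEnd ℂ) (u i)) ᵥ* Aᴴ = fun j => (starRingEnd ℂ) ((A *ᵥ u) j) := by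
  funext j
  simp [Matrix.vecMul, Matrix.mulVec, dotProduct, Fin.sum_univ_two,
    Matrix.conjTranspose_apply, _root_.map_add, _root_.map_mul]
  ring

lemma gb_im_quadform (P : Matrix (Fin 2) (Fin 2) ℂ) (w : Fin 2 → ℝ) :
    w ⬝ᵥ ((fun i j => (P i j).im) *ᵥ w)
      = ((fun i => (w i : ℂ)) ⬝ᵥ (P *ᵥ (fun i => (w i : ℂ)))).im := by
  simp [dotProduct, Matrix.mulVec, Fin.sum_univ_two, Complex.add_im, Complex.mul_im]

end GBAux

/-- Proposition A1, final item: under the Gaussian beam setup, `Im M(s)` with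
`M(s) = N(s) Y(s)⁻¹` remains positive definite on the orthogonal complement of the
(real, nonvanishing) velocity `ẏ(s)` for all `s`. -/
theorem im_M_pos_def_on_velocity_complement
    (A B C : ℝ → Matrix (Fin 2) (Fin 2) ℝ)
    (hA : Continuous A) (hB : Continuous B) (hC : Continuous C)
    (hAsymm : ∀ s, (A s)ᵀ = A s) (hCsymm : ∀ s, (C s)ᵀ = C s)
    (M₀ : Matrix (Fin 2) (Fin 2) ℂ) (hM₀symm : M₀ᵀ = M₀)
    (Y N : ℝ → Matrix (Fin 2) (Fin 2) ℂ)
    (hY : ∀ s, HasDerivAt Y ((B s).map Complex.ofReal * Y s + (C s).map Complex.ofReal * N s) s)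
    (hN : ∀ s, HasDerivAt N
      (-((A s).map Complex.ofReal * Y s) - ((B s)ᵀ).map Complex.ofReal * N s) s)
    (hY0 : Y 0 = 1) (hN0 : N 0 = M₀)
    (yd pd : ℝ → Fin 2 → ℝ)
    (hyd : ∀ s, HasDerivAt yd (B s *ᵥ yd s + C s *ᵥ pd s) s)
    (hpd : ∀ s, HasDerivAt pd (-(A s *ᵥ yd s) - (B s)ᵀ *ᵥ pd s) s)
    (hinit : M₀ *ᵥ (fun i => (yd 0 i : ℂ)) = fun i => (pd 0 i : ℂ))
    (hpos0 : ∀ a : Fin 2 → ℝ, a ≠ 0 → a ⬝ᵥ yd 0 = 0 →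
      0 < a ⬝ᵥ ((fun i j => (M₀ i j).im) *ᵥ a))
    (hydne : ∀ s, yd s ≠ 0)
    (hYinv : ∀ s, IsUnit (Y s))
    (hMdy : ∀ s, (N s * (Y s)⁻¹) *ᵥ (fun i => (yd s i : ℂ)) = fun i => (pd s i : ℂ)) :
    ∀ s, ∀ w : Fin 2 → ℝ, w ≠ 0 → w ⬝ᵥ yd s = 0 →
      0 < w ⬝ᵥ ((fun i j => ((N s * (Y s)⁻¹) i j).im) *ᵥ w) := by
  -- basic objects
  set G : Matrix (Fin 2) (Fin 2) ℝ := fun i j => (M₀ i j).im with hGdef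
  set Gc : Matrix (Fin 2) (Fin 2) ℂ := G.map Complex.ofReal with hGcdef
  set e : Fin 2 → ℝ := yd 0 with hedef
  set f : Fin 2 → ℝ := ![-(e 1), e 0] with hfdef
  have he0 : e ≠ 0 := hydne 0
  set eC : Fin 2 → ℂ := fun i => (e i : ℂ) with heCdef
  set fC : Fin 2 → ℂ := fun i => (f i : ℂ) with hfCdef
  have hsymm : ∀ i j, M₀ j i = M₀ i j := by
    intro i j
    conv_lhs => rw [← hM₀symm]
    rfl
  -- G is symmetric
  have hGsymm : Gᵀ = G := by
    ext i j
    simp [hGdef, Matrix.transpose_apply, hsymm i j]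
    exact congrArg Complex.im (hsymm i j)
  have hGcsymm : Gcᵀ = Gc := by
    rw [hGcdef, ← Matrix.transpose_map, hGsymm]
  -- G kills e
  have hGe : G *ᵥ e = 0 := by
    funext i
    have h := congrArg Complex.im (congrFun hinit i)
    simp [heCdef, Matrix.mulVec, dotProduct, Fin.sum_univ_two, Complex.add_im,
      Complex.mul_im] at h
    simp only [hGdef, Matrix.mulVec, dotProduct, Fin.sum_univ_two, Pi.zero_apply]
    linarith [h]
  have hGcE : Gc *ᵥ eC = 0 := by
    funext i
    have h := congrFun hGe i
    simp only [Matrix.mulVec, dotProduct, Fin.sum_univ_two, Pi.zero_apply] at h ⊢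
    rw [hGcdef, heCdef]
    simp only [Matrix.map_apply]
    exact_mod_cast h
  -- positivity on the complement at time 0
  have hfne : f ≠ 0 := by
    intro hf0
    apply he0
    funext i
    have h0 := congrFun hf0 0
    have h1 := congrFun hf0 1
    simp [hfdef] at h0 h1
    fin_cases i <;> simp [h0, h1]
  have hfperp : f ⬝ᵥ e = 0 := by
    simp [hfdef, dotProduct, Fin.sum_univ_two]
    ring
  have hc : 0 < f ⬝ᵥ (G *ᵥ f) := hpos0 f hfne hfperp
  set c : ℝ := f ⬝ᵥ (G *ᵥ f) with hcdef
  have hfGfC : fC ⬝ᵥ (Gc *ᵥ fC) = (c : ℂ) := by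
    rw [hcdef, hGcdef, hfCdef]
    simp only [dotProduct, Matrix.mulVec, Fin.sum_univ_two, Matrix.map_apply]
    push_cast
    ring
  have heGfC : eC ⬝ᵥ (Gc *ᵥ fC) = 0 := by
    rw [Matrix.dotProduct_mulVec]
    have : eC ᵥ* Gc = Gc *ᵥ eC := by
      conv_lhs => rw [← hGcsymm]
      exact Matrix.vecMul_transpose Gc eC
    rw [this, hGcE]
    simp
  -- quadratic form identity
  have hquad : ∀ lam mu : ℂ,
      (fun i => (starRingEnd ℂ) ((lam • eC + mu • fC) i)) ⬝ᵥ (Gc *ᵥ (lam • eC + mu • fC))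
        = (starRingEnd ℂ) mu * mu * (c : ℂ) := by
    intro lam mu
    have hconj : (fun i => (starRingEnd ℂ) ((lam • eC + mu • fC) i))
        = (starRingEnd ℂ) lam • eC + (starRingEnd ℂ) mu • fC := by
      funext i
      simp [heCdef, hfCdef, Complex.conj_ofReal]
    rw [hconj]
    rw [Matrix.mulVec_add, Matrix.mulVec_smul, Matrix.mulVec_smul, hGcE, smul_zero, zero_add]
    rw [add_dotProduct, smul_dotProduct, smul_dotProduct, dotProduct_smul, dotProduct_smul,
      heGfC, hfGfC]
    simp [smul_eq_mul]
    ring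
  -- the invariants, specialized
  have hI1 : ∀ t, (Y t)ᴴ * N t - (N t)ᴴ * Y t = (2 * Complex.I) • Gc := by
    intro t
    rw [gb_invariant_one A B C hAsymm hCsymm Y N hY hN t, hY0, hN0]
    ext i j
    simp only [Matrix.conjTranspose_one, Matrix.one_mul, Matrix.mul_one, Matrix.sub_apply,
      Matrix.smul_apply, Matrix.conjTranspose_apply, hsymm i j]
    rw [hGcdef, hGdef]
    show M₀ i j - star (M₀ i j) = (2 * Complex.I) • ((M₀ i j).im : ℂ)
    rw [show star (M₀ i j) = (starRingEnd ℂ) (M₀ i j) from rfl, Complex.sub_conj,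
      smul_eq_mul]
    push_cast
    ring
  have hI2 : ∀ t, (Y t)ᴴ *ᵥ (fun i => (pd t i : ℂ)) = (N t)ᴴ *ᵥ (fun i => (yd t i : ℂ)) := by
    intro t
    have h := gb_invariant_two A B C hAsymm hCsymm Y N hY hN yd pd hyd hpd t
    rw [hY0, hN0] at h
    have hz : (1 : Matrix (Fin 2) (Fin 2) ℂ)ᴴ *ᵥ (fun i => (pd 0 i : ℂ))
        - M₀ᴴ *ᵥ (fun i => (yd 0 i : ℂ)) = 0 := by
      have hM : M₀ᴴ *ᵥ (fun i => (yd 0 i : ℂ)) = fun i => (pd 0 i : ℂ) := by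
        funext i
        have hi := congrFun hinit i
        simp only [Matrix.mulVec, dotProduct, Fin.sum_univ_two,
          Matrix.conjTranspose_apply] at hi ⊢
        rw [hsymm i 0, hsymm i 1]
        rw [← Complex.conj_ofReal (pd 0 i), ← hi]
        simp [_root_.map_add, _root_.map_mul, Complex.conj_ofReal, heCdef, hedef]
      rw [hM]
      simp
    rw [hz] at h
    exact sub_eq_zero.1 h
  intro s w hw0 hwperp
  -- invertibility at s
  have hdet : IsUnit (Y s).det := (Matrix.isUnit_iff_isUnit_det (Y s)).1 (hYinv s)
  have hYYi : Y s * (Y s)⁻¹ = 1 := Matrix.mul_nonsing_inv (Y s) hdet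
  have hYmv : ∀ u : Fin 2 → ℂ, Y s *ᵥ ((Y s)⁻¹ *ᵥ u) = u := by
    intro u
    rw [Matrix.mulVec_mulVec, hYYi, Matrix.one_mulVec]
  set wC : Fin 2 → ℂ := fun i => (w i : ℂ) with hwCdef
  set zeta : Fin 2 → ℂ := (Y s)⁻¹ *ᵥ (fun i => (yd s i : ℂ)) with hzetadef
  set z : Fin 2 → ℂ := (Y s)⁻¹ *ᵥ wC with hzdef
  have hYzeta : Y s *ᵥ zeta = fun i => (yd s i : ℂ) := hYmv _
  have hYz : Y s *ᵥ z = wC := hYmv _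
  have hNzeta : N s *ᵥ zeta = fun i => (pd s i : ℂ) := by
    rw [hzetadef, Matrix.mulVec_mulVec]
    exact hMdy s
  -- Gc kills zeta
  have hGczeta : Gc *ᵥ zeta = 0 := by
    have h3 : ((Y s)ᴴ * N s - (N s)ᴴ * Y s) *ᵥ zeta = 0 := by
      rw [Matrix.sub_mulVec, ← Matrix.mulVec_mulVec zeta ((Y s)ᴴ) (N s),
        ← Matrix.mulVec_mulVec zeta ((N s)ᴴ) (Y s), hNzeta, hYzeta, hI2 s, sub_self]
    rw [hI1 s, Matrix.smul_mulVec] at h3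
    rcases smul_eq_zero.1 h3 with h | h
    · exfalso
      have : (2 : ℂ) * Complex.I ≠ 0 := by
        simp [Complex.I_ne_zero]
      exact this h
    · exact h
  -- decompose zeta
  obtain ⟨l0, m0, hzetad⟩ := gb_decomp2 e he0 zeta
  rw [← hfdef, ← hfCdef, ← heCdef] at hzetad
  have hcC : (c : ℂ) ≠ 0 := Complex.ofReal_ne_zero.2 hc.ne'
  have hm0 : m0 = 0 := by
    have hfdot : fC ⬝ᵥ (Gc *ᵥ zeta) = m0 * (c : ℂ) := by
      rw [hzetad, Matrix.mulVec_add, Matrix.mulVec_smul, Matrix.mulVec_smul, hGcE, smul_zero,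
        zero_add, dotProduct_smul, hfGfC, smul_eq_mul]
    have h0 : m0 * (c : ℂ) = 0 := by rw [← hfdot, hGczeta, dotProduct_zero]
    exact (mul_eq_zero.1 h0).resolve_right hcC
  have hzetae : zeta = l0 • eC := by rw [hzetad, hm0, zero_smul, add_zero]
  have hl0 : l0 ≠ 0 := by
    intro h
    apply hydne s
    have h4 : (fun i => (yd s i : ℂ)) = 0 := by
      rw [← hYzeta, hzetae, h, zero_smul, Matrix.mulVec_zero]
    funext i
    have h5 := congrFun h4 i
    simp only [Pi.zero_apply] at h5 ⊢
    exact_mod_cast h5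
  -- decompose z
  obtain ⟨l, m, hzd2⟩ := gb_decomp2 e he0 z
  rw [← hfdef, ← hfCdef, ← heCdef] at hzd2
  have hyy : (fun i => (yd s i : ℂ)) ⬝ᵥ (fun i => (yd s i : ℂ)) ≠ 0 := by
    have hne : yd s 0 ≠ 0 ∨ yd s 1 ≠ 0 := by
      by_contra hcon
      push_neg at hcon
      exact hydne s (funext fun i => by fin_cases i <;> simp [hcon.1, hcon.2])
    have hdd : (0:ℝ) < yd s 0 ^ 2 + yd s 1 ^ 2 := by
      rcases hne with h | h
      · have : (0:ℝ) < yd s 0 ^ 2 := by positivity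
        nlinarith [sq_nonneg (yd s 1)]
      · have : (0:ℝ) < yd s 1 ^ 2 := by positivity
        nlinarith [sq_nonneg (yd s 0)]
    have : (fun i => (yd s i : ℂ)) ⬝ᵥ (fun i => (yd s i : ℂ))
        = ((yd s 0 ^ 2 + yd s 1 ^ 2 : ℝ) : ℂ) := by
      simp [dotProduct, Fin.sum_univ_two]
      push_cast
      ring
    rw [this]
    exact_mod_cast hdd.ne'
  have hdot0 : wC ⬝ᵥ (fun i => (yd s i : ℂ)) = 0 := by
    have h5 : ((w ⬝ᵥ yd s : ℝ) : ℂ) = 0 := by rw [hwperp]; simp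
    rw [← h5, hwCdef]
    simp [dotProduct, Fin.sum_univ_two]
  have hm : m ≠ 0 := by
    intro hmz
    have hz' : z = l • eC := by rw [hzd2, hmz, zero_smul, add_zero]
    have hww : l0 • wC = l • (fun i => (yd s i : ℂ)) := by
      rw [← hYz, ← hYzeta, hz', hzetae, Matrix.mulVec_smul, Matrix.mulVec_smul,
        smul_smul, smul_smul, mul_comm]
    have h6 := congrArg (fun v => v ⬝ᵥ (fun i => (yd s i : ℂ))) hww
    simp only [smul_dotProduct, hdot0, smul_zero, smul_eq_mul, mul_zero] at h6
    have hl : l = 0 := by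
      rcases mul_eq_zero.1 h6.symm with h | h
      · exact h
      · exact absurd h hyy
    apply hw0
    have h7 : wC = 0 := by
      rw [← hYz, hz', hl, zero_smul, Matrix.mulVec_zero]
    funext i
    have h8 := congrFun h7 i
    rw [hwCdef] at h8
    simp only [Pi.zero_apply] at h8 ⊢
    exact_mod_cast h8
  -- the final quadratic form computation
  have hgoal : w ⬝ᵥ ((fun i j => ((N s * (Y s)⁻¹) i j).im) *ᵥ w)
      = (wC ⬝ᵥ ((N s * (Y s)⁻¹) *ᵥ wC)).im := by
    rw [hwCdef]
    exact gb_im_quadform (N s * (Y s)⁻¹) w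
  set X : ℂ := wC ⬝ᵥ ((N s * (Y s)⁻¹) *ᵥ wC) with hXdef
  have hXz : X = wC ⬝ᵥ (N s *ᵥ z) := by
    rw [hXdef, hzdef, Matrix.mulVec_mulVec]
  have hwCconj : (fun i => (starRingEnd ℂ) (wC i)) = wC := by
    funext i
    rw [hwCdef]
    exact Complex.conj_ofReal (w i)
  have T1 : (fun i => (starRingEnd ℂ) (z i)) ⬝ᵥ (((Y s)ᴴ * N s) *ᵥ z) = X := by
    rw [← Matrix.mulVec_mulVec, Matrix.dotProduct_mulVec, gb_vecMul_conjT]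
    simp only [hYz]
    rw [hwCconj, hXz]
  have T2 : (fun i => (starRingEnd ℂ) (z i)) ⬝ᵥ (((N s)ᴴ * Y s) *ᵥ z) = (starRingEnd ℂ) X := by
    rw [← Matrix.mulVec_mulVec, Matrix.dotProduct_mulVec, gb_vecMul_conjT]
    simp only [hYz]
    rw [hXz]
    simp only [dotProduct, Fin.sum_univ_two, _root_.map_add, _root_.map_mul]
    rw [hwCdef]
    simp [Complex.conj_ofReal]
    ring
  have hD : X - (starRingEnd ℂ) X = (2 * Complex.I) * ((starRingEnd ℂ) m * m * (c : ℂ)) := by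
    have hD1 : (fun i => (starRingEnd ℂ) (z i)) ⬝ᵥ ((((Y s)ᴴ * N s) - ((N s)ᴴ * Y s)) *ᵥ z)
        = X - (starRingEnd ℂ) X := by
      rw [Matrix.sub_mulVec, dotProduct_sub, T1, T2]
    rw [← hD1, hI1 s, Matrix.smul_mulVec, dotProduct_smul, smul_eq_mul]
    rw [hzd2, hquad l m]
  have him : X.im = Complex.normSq m * c := by
    have hsc := Complex.sub_conj X
    rw [hD] at hsc
    have h8 : ((2 * X.im : ℝ) : ℂ) * Complex.I = ((2 * (Complex.normSq m * c) : ℝ) : ℂ)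
        * Complex.I := by
      rw [← hsc]
      rw [mul_comm ((starRingEnd ℂ) m) m, Complex.mul_conj]
      push_cast
      ring
    have h9 := mul_right_cancel₀ Complex.I_ne_zero h8
    have h10 : (2 * X.im : ℝ) = 2 * (Complex.normSq m * c) := by exact_mod_cast h9
    linarith
  rw [hgoal, him]
  exact mul_pos (Complex.normSq_pos.2 hm) hc
end
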